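/- arXiv:1111.4869 — 5 statements merged into one kernel-verified Lean document; each statement's English description precedes it below -/
import Mathlib

section
/- Let M:[0,∞)→[0,∞) satisfy condition (M) with constants d_M ≥ 2 and D_M > 2. Then for every λ ≥ 1/d_M and all r, s ≥ 0 one has (M(r)/r)·s ≤ (1 − D_M^{−1})(λ D_M)^{−1/(D_M−1)} M(r) + λ M(s), where r ↦ M(r)/r is extended by continuity to the value 0 at r = 0. -/
open Real Set

/-- Condition **(M)** from the paper: `M : [0,∞) → [0,∞)` is nonconstant,
`M(ar) ≤ a^{D_M} M(r)` for `a ≥ 1` and `M(ar) ≤ a^{d_M} M(r)` for `a ∈ (0,1)`. -/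
def CondM (M : ℝ → ℝ) (dM DM : ℝ) : Prop :=
  (∀ r : ℝ, 0 ≤ r → 0 ≤ M r) ∧
  (∃ r s : ℝ, 0 ≤ r ∧ 0 ≤ s ∧ M r ≠ M s) ∧
  (∀ r : ℝ, 0 ≤ r → ∀ a : ℝ, 1 ≤ a → M (a * r) ≤ a ^ DM * M r) ∧
  (∀ r : ℝ, 0 ≤ r → ∀ a : ℝ, 0 < a → a < 1 → M (a * r) ≤ a ^ dM * M r)

/-!
With `t = s / r` the inequality reads `t M(r) ≤ C M(r) + λ M(t r)`. Condition (M), applied with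
`a = t⁻¹`, gives `M(t r) ≥ t^q M(r)` with `q = D_M` for `t ≤ 1` and `q = d_M` for `t > 1`, so it
suffices that `t ≤ C + λ t^q`. For `q = D_M` this is Young's inequality with exponents `D_M` and
its conjugate, and `C` is exactly the resulting constant. For `t > 1` Bernoulli's inequality
`1 + d_M (t - 1) ≤ t^{d_M}` together with `λ d_M ≥ 1` reduces it to the case `t = 1`.
-/

namespace Real

theorem self_le_add_mul_rpow {p c t : ℝ} (hp : 1 < p) (hc : 0 < c) (ht : 0 ≤ t) :
    t ≤ (1 - p⁻¹) * (c * p) ^ (-1 / (p - 1)) + c * t ^ p := by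
  have hp0 : 0 < p := by linarith
  have hcp : 0 < c * p := by positivity
  have hyoung := young_inequality_of_nonneg
    (a := t * (c * p) ^ p⁻¹) (b := (c * p) ^ (-p⁻¹))
    (mul_nonneg ht (rpow_nonneg hcp.le _)) (rpow_nonneg hcp.le _) (HolderConjugate.conjExponent hp)
  have hab : t * (c * p) ^ p⁻¹ * (c * p) ^ (-p⁻¹) = t := by
    rw [mul_assoc, ← rpow_add hcp, add_neg_cancel, rpow_zero, mul_one]
  have ha : (t * (c * p) ^ p⁻¹) ^ p / p = c * t ^ p := by
    rw [mul_rpow ht (rpow_nonneg hcp.le _), ← rpow_mul hcp.le, inv_mul_cancel₀ hp0.ne', rpow_one]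
    field_simp
  have hb : ((c * p) ^ (-p⁻¹)) ^ p.conjExponent / p.conjExponent
      = (1 - p⁻¹) * (c * p) ^ (-1 / (p - 1)) := by
    rw [conjExponent]
    have hexp : -p⁻¹ * (p / (p - 1)) = -1 / (p - 1) := by field_simp
    have hinv : (p / (p - 1))⁻¹ = 1 - p⁻¹ := by rw [inv_div]; field_simp
    rw [← rpow_mul hcp.le, hexp, div_eq_mul_inv, hinv, mul_comm]
  rw [hab, ha, hb] at hyoung
  linarith

theorem self_le_add_mul_rpow_of_one_le {q c K t : ℝ} (hq : 1 ≤ q) (hcq : 1 ≤ c * q)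
    (hK : 1 ≤ K + c) (ht : 1 ≤ t) : t ≤ K + c * t ^ q := by
  have hc : 0 ≤ c := by nlinarith
  have hbernoulli : 1 + q * (t - 1) ≤ t ^ q := by
    simpa using one_add_mul_self_le_rpow_one_add (s := t - 1) (by linarith) hq
  nlinarith [mul_le_mul_of_nonneg_left hbernoulli hc]

end Real

namespace CondM

variable {M : ℝ → ℝ} {dM DM r t : ℝ}

theorem rpow_mul_le_of_le_one (hM : CondM M dM DM) (hDM : DM ≠ 0) (hr : 0 ≤ r) (ht : 0 ≤ t)
    (ht1 : t ≤ 1) : t ^ DM * M r ≤ M (t * r) := by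
  rcases ht.eq_or_lt with rfl | ht0
  · simpa [zero_rpow hDM] using hM.1 0 le_rfl
  have h := hM.2.2.1 (t * r) (by positivity) t⁻¹ (one_le_inv₀ ht0 |>.mpr ht1)
  rwa [inv_mul_cancel_left₀ ht0.ne', inv_rpow ht, le_inv_mul_iff₀ (by positivity)] at h

theorem rpow_mul_le_of_one_lt (hM : CondM M dM DM) (hr : 0 ≤ r) (ht : 1 < t) :
    t ^ dM * M r ≤ M (t * r) := by
  have ht0 : 0 < t := by linarith
  have h := hM.2.2.2 (t * r) (by positivity) t⁻¹ (by positivity) (inv_lt_one_of_one_lt₀ ht)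
  rwa [inv_mul_cancel_left₀ ht0.ne', inv_rpow ht0.le, le_inv_mul_iff₀ (by positivity)] at h

end CondM

/-- At `r = 0`, Lean's `M 0 / 0 = 0` agrees with the continuous extension of `r ↦ M(r)/r`. -/
theorem stmt_0 (M : ℝ → ℝ) (dM DM : ℝ) (hdM : 2 ≤ dM) (hDM : 2 < DM)
    (hM : CondM M dM DM) (lam : ℝ) (hlam : 1 / dM ≤ lam)
    (r s : ℝ) (hr : 0 ≤ r) (hs : 0 ≤ s) :
    (M r / r) * s ≤
      (1 - DM⁻¹) * (lam * DM) ^ (-1 / (DM - 1)) * M r + lam * M s := by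
  set C := (1 - DM⁻¹) * (lam * DM) ^ (-1 / (DM - 1))
  have hlam0 : 0 < lam := lt_of_lt_of_le (by positivity) hlam
  have hyoung {t : ℝ} (ht : 0 ≤ t) : t ≤ C + lam * t ^ DM :=
    self_le_add_mul_rpow (by linarith) hlam0 ht
  rcases hr.eq_or_lt with rfl | hr0
  · have hC : 0 ≤ C := by simpa [zero_rpow (by linarith : DM ≠ 0)] using hyoung le_rfl
    simpa using add_nonneg (mul_nonneg hC (hM.1 0 le_rfl)) (mul_nonneg hlam0.le (hM.1 s hs))
  obtain ⟨t, ht, rfl⟩ : ∃ t, 0 ≤ t ∧ s = t * r :=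
    ⟨s / r, div_nonneg hs hr0.le, (div_mul_cancel₀ s hr0.ne').symm⟩
  obtain ⟨q, hq, hMq⟩ : ∃ q : ℝ, t ≤ C + lam * t ^ q ∧ t ^ q * M r ≤ M (t * r) := by
    rcases le_or_gt t 1 with ht1 | ht1
    · exact ⟨DM, hyoung ht, hM.rpow_mul_le_of_le_one (by linarith) hr ht ht1⟩
    · have hlamdM : 1 ≤ lam * dM := by rwa [div_le_iff₀ (by linarith)] at hlam
      have hone : 1 ≤ C + lam := by simpa using hyoung zero_le_one
      exact ⟨dM, self_le_add_mul_rpow_of_one_le (by linarith) hlamdM hone ht1.le,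
        hM.rpow_mul_le_of_one_lt hr ht1⟩
  calc M r / r * (t * r) = t * M r := by field_simp
    _ ≤ (C + lam * t ^ q) * M r := mul_le_mul_of_nonneg_right hq (hM.1 r hr)
    _ = C * M r + lam * (t ^ q * M r) := by ring
    _ ≤ C * M r + lam * M (t * r) := by gcongr
end

section
/- Let M:[0,∞)→[0,∞) satisfy condition (M) with constants d_M ≥ 2 and D_M > 2. Then for every λ ≥ 1/d_M and all r, s ≥ 0 one has (M(r)/r²)·s² ≤ (1 − 2D_M^{−1})(λ D_M)^{−2/(D_M−2)} M(r) + 2λ M(s), where r ↦ M(r)/r² is extended by continuity to r = 0. -/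
open Real Set

/-!
Put `t = s / r`, so that the claim reads `t² M(r) ≤ C M(r) + 2λ M(s)`. Rescaling `s` to `r`,
condition (M) gives `t^{D_M} M(r) ≤ M(s)` when `t ≤ 1` and `t^{d_M} M(r) ≤ M(s)` when `t > 1`.
It therefore suffices that `t² ≤ C + 2λ t^{D_M}` for all `t ≥ 0`, which is weighted AM-GM and is
where the constant `C` comes from, and that `t² ≤ 1 - 2λ + 2λ t^{d_M}` for `t ≥ 1`, which is
Bernoulli's inequality together with `λ d_M ≥ 1`; note `1 - 2λ ≤ C` (take `t = 1` in the former).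
At `r = 0`, condition (M) forces `M(0) = 0` and `M(t) ≤ t^{d_M} M(1) → 0`, so the bound passes to
the limit `t → 0⁺`.
-/

open Filter Topology

/-- Weighted AM-GM with weights `1 - 2/D` and `2/D` at the points `(λD)^{-2/(D-2)}` and
`λD x^D`. -/
lemma sq_le_young_rpow {DM lam x : ℝ} (hDM : 2 < DM) (hlam : 0 < lam) (hx : 0 ≤ x) :
    x ^ 2 ≤ (1 - 2 * DM⁻¹) * (lam * DM) ^ (-2 / (DM - 2)) + 2 * lam * x ^ DM := by
  have hD : 0 < DM := by linarith
  have hD2 : DM - 2 ≠ 0 := by linarith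
  have ha : 0 < lam * DM := by positivity
  have hw : 2 * DM⁻¹ ≤ 1 := by rw [mul_inv_le_iff₀ hD]; linarith
  have hamgm := geom_mean_le_arith_mean2_weighted (sub_nonneg.2 hw) (by positivity)
    (rpow_nonneg ha.le (-2 / (DM - 2))) (by positivity : 0 ≤ lam * DM * x ^ DM)
    (sub_add_cancel 1 (2 * DM⁻¹))
  have hgeom : ((lam * DM) ^ (-2 / (DM - 2))) ^ (1 - 2 * DM⁻¹) *
      (lam * DM * x ^ DM) ^ (2 * DM⁻¹) = x ^ 2 := by
    rw [← rpow_mul ha.le, mul_rpow ha.le (by positivity), ← rpow_mul hx, ← mul_assoc,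
      ← rpow_add ha]
    have h1 : -2 / (DM - 2) * (1 - 2 * DM⁻¹) + 2 * DM⁻¹ = 0 := by
      field_simp; ring
    have h2 : DM * (2 * DM⁻¹) = 2 := by field_simp
    rw [h1, h2, rpow_zero, one_mul, rpow_two]
  calc x ^ 2 ≤ _ := hgeom ▸ hamgm
    _ = _ := by field_simp

lemma sq_le_bernoulli_rpow {dM lam t : ℝ} (hdM : 2 ≤ dM) (hlam : 1 ≤ lam * dM) (ht : 1 ≤ t) :
    t ^ 2 ≤ 1 - 2 * lam + 2 * lam * t ^ dM := by
  have hlam0 : 0 < lam := pos_of_mul_pos_left (by linarith) (by linarith : (0:ℝ) ≤ dM)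
  have hsq : t ^ 2 - 1 ≤ lam * dM * (t ^ 2 - 1) := le_mul_of_one_le_left (by nlinarith) hlam
  have hbern := one_add_mul_self_le_rpow_one_add (s := t ^ 2 - 1) (by nlinarith)
    (p := dM / 2) (by linarith)
  have hpow : (t ^ 2) ^ (dM / 2) = t ^ dM := by
    rw [← rpow_two, ← rpow_mul (by linarith), mul_div_cancel₀ _ two_ne_zero]
  rw [add_sub_cancel, hpow] at hbern
  linarith [mul_le_mul_of_nonneg_left hbern (by positivity : (0:ℝ) ≤ 2 * lam)]

lemma inv_rpow_mul_le {M : ℝ → ℝ} {p a x : ℝ} (ha : 0 < a) (h : M (a * x) ≤ a ^ p * M x) :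
    a⁻¹ ^ p * M (a * x) ≤ M x :=
  calc a⁻¹ ^ p * M (a * x) ≤ a⁻¹ ^ p * (a ^ p * M x) := by gcongr
    _ = M x := by rw [inv_rpow ha.le, inv_mul_cancel_left₀ (rpow_pos_of_pos ha p).ne']

namespace CondM

variable {M : ℝ → ℝ} {dM DM : ℝ}

lemma map_zero (hM : CondM M dM DM) (hdM : 0 < dM) : M 0 = 0 := by
  have h := hM.2.2.2 0 le_rfl (1 / 2) (by norm_num) (by norm_num)
  have hpow : (1 / 2 : ℝ) ^ dM < 1 := rpow_lt_one (by norm_num) (by norm_num) hdM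
  rw [mul_zero] at h
  nlinarith [hM.1 0 le_rfl]

lemma tendsto_nhdsGT_zero (hM : CondM M dM DM) (hdM : 0 < dM) :
    Tendsto M (𝓝[>] 0) (𝓝 (M 0)) := by
  have hpow : Tendsto (fun t : ℝ => t ^ dM * M 1) (𝓝[>] 0) (𝓝 0) := by
    have := ((continuousAt_rpow_const 0 dM (Or.inr hdM.le)).tendsto.mul_const (M 1))
    rw [zero_rpow hdM.ne', zero_mul] at this
    exact this.mono_left nhdsWithin_le_nhds
  rw [hM.map_zero hdM]
  refine tendsto_of_tendsto_of_tendsto_of_le_of_le' tendsto_const_nhds hpow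
    (eventually_nhdsWithin_of_forall fun t ht => hM.1 t (le_of_lt ht)) ?_
  filter_upwards [Ioo_mem_nhdsGT one_pos] with t ht
  simpa using hM.2.2.2 1 zero_le_one t ht.1 ht.2

lemma div_rpow_mul_le_of_le (hM : CondM M dM DM) (hDM : 0 < DM) {r s : ℝ} (hr : 0 < r)
    (hs : 0 ≤ s) (hsr : s ≤ r) : (s / r) ^ DM * M r ≤ M s := by
  rcases hs.eq_or_lt with rfl | hs
  · simpa [zero_rpow hDM.ne'] using hM.1 0 le_rfl
  have h := inv_rpow_mul_le (div_pos hr hs) (hM.2.2.1 s hs.le (r / s) ((one_le_div hs).2 hsr))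
  rwa [inv_div, div_mul_cancel₀ _ hs.ne'] at h

lemma div_rpow_mul_le_of_lt (hM : CondM M dM DM) {r s : ℝ} (hr : 0 < r) (hrs : r < s) :
    (s / r) ^ dM * M r ≤ M s := by
  have hs : 0 < s := hr.trans hrs
  have h := inv_rpow_mul_le (div_pos hr hs)
    (hM.2.2.2 s hs.le (r / s) (div_pos hr hs) ((div_lt_one hs).2 hrs))
  rwa [inv_div, div_mul_cancel₀ _ hs.ne'] at h

lemma div_sq_mul_sq_le (hM : CondM M dM DM) (hdM : 2 ≤ dM) (hDM : 2 < DM) {lam : ℝ}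
    (hlam : 1 ≤ lam * dM) {r s : ℝ} (hr : 0 < r) (hs : 0 ≤ s) :
    (M r / r ^ 2) * s ^ 2 ≤
      (1 - 2 * DM⁻¹) * (lam * DM) ^ (-2 / (DM - 2)) * M r + 2 * lam * M s := by
  set C := (1 - 2 * DM⁻¹) * (lam * DM) ^ (-2 / (DM - 2))
  have hlam0 : 0 < lam := pos_of_mul_pos_left (by linarith) (by linarith : (0:ℝ) ≤ dM)
  set t := s / r
  have hlhs : M r / r ^ 2 * s ^ 2 = t ^ 2 * M r := by
    simp only [t]; field_simp
  have key : ∀ p : ℝ, t ^ 2 ≤ C + 2 * lam * t ^ p → t ^ p * M r ≤ M s →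
      t ^ 2 * M r ≤ C * M r + 2 * lam * M s := fun p hsq hscale =>
    calc t ^ 2 * M r ≤ (C + 2 * lam * t ^ p) * M r := by gcongr; exact hM.1 r hr.le
      _ = C * M r + 2 * lam * (t ^ p * M r) := by ring
      _ ≤ C * M r + 2 * lam * M s := by gcongr
  rw [hlhs]
  rcases le_or_gt s r with hsr | hrs
  · exact key DM (sq_le_young_rpow hDM hlam0 (by positivity))
      (hM.div_rpow_mul_le_of_le (by linarith) hr hs hsr)
  · have hC : 1 - 2 * lam ≤ C := by simpa using sq_le_young_rpow hDM hlam0 zero_le_one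
    exact key dM ((sq_le_bernoulli_rpow hdM hlam ((one_lt_div hr).2 hrs).le).trans (by linarith))
      (hM.div_rpow_mul_le_of_lt hr hrs)

end CondM

/-- Lemma (ni2): for `λ ≥ 1/d_M` and `r, s ≥ 0`,
`(M(r)/r²)·s² ≤ (1 − 2D_M⁻¹)(λD_M)^{−2/(D_M−2)} M(r) + 2λ M(s)`.
For `r > 0` this is stated directly; at `r = 0` the quantity `M(r)/r²` is
replaced by its continuous extension, i.e. the limit of `M(t)/t²` as `t → 0⁺`. -/
theorem stmt_1 (M : ℝ → ℝ) (dM DM : ℝ) (hdM : 2 ≤ dM) (hDM : 2 < DM)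
    (hM : CondM M dM DM) (lam : ℝ) (hlam : 1 / dM ≤ lam)
    (s : ℝ) (hs : 0 ≤ s) :
    (∀ r : ℝ, 0 < r →
      (M r / r ^ 2) * s ^ 2 ≤
        (1 - 2 * DM⁻¹) * (lam * DM) ^ (-2 / (DM - 2)) * M r + 2 * lam * M s) ∧
    (∀ c : ℝ,
      Filter.Tendsto (fun t => M t / t ^ 2) (nhdsWithin 0 (Set.Ioi 0)) (nhds c) →
      c * s ^ 2 ≤
        (1 - 2 * DM⁻¹) * (lam * DM) ^ (-2 / (DM - 2)) * M 0 + 2 * lam * M s) := by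
  have hdM0 : 0 < dM := by linarith
  have hlam' : 1 ≤ lam * dM := by rwa [div_le_iff₀ hdM0] at hlam
  have hpos := fun r (hr : 0 < r) => hM.div_sq_mul_sq_le hdM hDM hlam' hr hs
  exact ⟨hpos, fun c hc => le_of_tendsto_of_tendsto (hc.mul_const _)
    (((hM.tendsto_nhdsGT_zero hdM0).const_mul _).add_const _)
    (eventually_nhdsWithin_of_forall hpos)⟩
end

section
/- Let n ≥ 1 and p > 2. There do not exist finite constants C₁ and C₂ with C₂ ≤ p^p such that the inequality ∫₀^∞ (r|u(r)|)^p dμ_n(r) ≤ C₁ ∫₀^∞ |u(r)|^p dμ_n(r) + C₂ ∫₀^∞ |u'(r)|^p dμ_n(r) holds for all continuous and piecewise C¹ functions u:[0,∞)→ℝ (a family of counterexamples is given by u_α(r) = exp(α r²/(2p)) with α → 1⁻). -/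
open MeasureTheory Real Set Filter

/-- The measure `dμ_n(r) = r^{n-1} e^{-r²/2} dr` on `(0,∞)`. -/
noncomputable def muN (n : ℕ) : Measure ℝ :=
  (volume.restrict (Set.Ioi (0 : ℝ))).withDensity
    (fun r => ENNReal.ofReal (r ^ (n - 1) * Real.exp (-r ^ 2 / 2)))

/-- `u : [0,∞) → ℝ` is continuous and piecewise `C¹`: it is continuous on `[0,∞)`
and, off a finite set `S`, differentiable with continuous derivative. -/
def PiecewiseC1 (u : ℝ → ℝ) : Prop :=
  ContinuousOn u (Set.Ici 0) ∧
  ∃ S : Set ℝ, S.Finite ∧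
    (∀ x ∈ Set.Ici (0 : ℝ) \ S, DifferentiableAt ℝ u x) ∧
    ContinuousOn (deriv u) (Set.Ici (0 : ℝ) \ S)

/-!
For `0 < α < 1` take `u(r) = exp (α r² / (2p))`. Then `u' = (α r / p) u`, so with
`K = ∫ (r|u|)^p dμ_n` and `L = ∫ |u|^p dμ_n` the derivative term is `(α/p)^p K`, and with
`β = (1 - α)/2` both `K` and `L` are Gaussian moments `∫ r^q e^{-β r²} dr`, i.e. explicit Gamma
values. Since `C₂ ≤ p^p`, the inequality gives `(1 - α^p) K ≤ C₁ L`, hence `2β K ≤ C₁ L`, which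
reads `β^{-(p-2)/2} Γ((n+p)/2) ≤ C₁ Γ(n/2) / 2`; this fails as `β → 0⁺` because `p > 2`.
-/

open Topology

lemma lintegral_Ioi_rpow_mul_exp_neg_mul_sq {q b : ℝ} (hq : -1 < q) (hb : 0 < b) :
    ∫⁻ r in Ioi 0, ENNReal.ofReal (r ^ q * exp (-b * r ^ 2)) =
      ENNReal.ofReal (b ^ (-(q + 1) / 2) * (1 / 2) * Gamma ((q + 1) / 2)) := by
  rw [← ofReal_integral_eq_lintegral_ofReal (integrableOn_rpow_mul_exp_neg_mul_sq hb hq)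
    (ae_restrict_of_forall_mem measurableSet_Ioi fun r (hr : 0 < r) => by positivity)]
  simp_rw [← rpow_two]
  rw [integral_rpow_mul_exp_neg_mul_rpow two_pos hq hb]

lemma ae_muN_pos (n : ℕ) : ∀ᵐ r ∂ muN n, 0 < r :=
  (withDensity_absolutelyContinuous _ _).ae_le (ae_restrict_mem measurableSet_Ioi)

lemma lintegral_muN (n : ℕ) {f : ℝ → ℝ} (hf : Measurable f) :
    ∫⁻ r, ENNReal.ofReal (f r) ∂ muN n =
      ∫⁻ r in Ioi 0, ENNReal.ofReal (r ^ (n - 1) * exp (-r ^ 2 / 2) * f r) := by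
  rw [muN, lintegral_withDensity_eq_lintegral_mul _ (by fun_prop) hf.ennreal_ofReal]
  refine setLIntegral_congr_fun measurableSet_Ioi fun r (hr : 0 < r) => ?_
  rw [Pi.mul_apply, ← ENNReal.ofReal_mul (by positivity)]

lemma lintegral_muN_rpow_mul_exp {n : ℕ} (hn : 1 ≤ n) {s a : ℝ} (hs : -(n : ℝ) < s)
    (ha : a < 1 / 2) :
    ∫⁻ r, ENNReal.ofReal (r ^ s * exp (a * r ^ 2)) ∂ muN n =
      ENNReal.ofReal ((1 / 2 - a) ^ (-(n + s) / 2) * (1 / 2) * Gamma ((n + s) / 2)) := by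
  have h := lintegral_Ioi_rpow_mul_exp_neg_mul_sq (q := n - 1 + s) (by linarith) (sub_pos.2 ha)
  rw [show (n : ℝ) - 1 + s + 1 = n + s by ring] at h
  rw [lintegral_muN n (by fun_prop), ← h]
  refine setLIntegral_congr_fun measurableSet_Ioi fun r (hr : 0 < r) => ?_
  have hpow : r ^ (n - 1) = r ^ ((n : ℝ) - 1) := by
    rw [← rpow_natCast, Nat.cast_sub hn, Nat.cast_one]
  rw [hpow, rpow_add hr]
  congr 1
  calc r ^ ((n : ℝ) - 1) * exp (-r ^ 2 / 2) * (r ^ s * exp (a * r ^ 2))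
      = r ^ ((n : ℝ) - 1) * r ^ s * exp (-r ^ 2 / 2 + a * r ^ 2) := by rw [exp_add]; ring
    _ = r ^ ((n : ℝ) - 1) * r ^ s * exp (-(1 / 2 - a) * r ^ 2) := by ring_nf

lemma piecewiseC1_of_contDiff {u : ℝ → ℝ} (hu : ContDiff ℝ 1 u) : PiecewiseC1 u :=
  ⟨hu.continuous.continuousOn, ∅, finite_empty,
    fun _ _ => (hu.differentiable one_ne_zero).differentiableAt,
    (hu.continuous_deriv le_rfl).continuousOn⟩

noncomputable def gaussTrial (p α r : ℝ) : ℝ := exp (α / (2 * p) * r ^ 2)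

lemma contDiff_gaussTrial (p α : ℝ) : ContDiff ℝ 1 (gaussTrial p α) := by
  unfold gaussTrial; fun_prop

lemma deriv_gaussTrial (p α r : ℝ) : deriv (gaussTrial p α) r = α / p * r * gaussTrial p α r := by
  have h := ((hasDerivAt_pow 2 r).const_mul (α / (2 * p))).exp
  unfold gaussTrial
  rw [h.deriv]
  push_cast
  ring

lemma gaussTrial_pos (p α r : ℝ) : 0 < gaussTrial p α r := exp_pos _

lemma gaussTrial_rpow {p : ℝ} (hp : p ≠ 0) (α r : ℝ) :
    gaussTrial p α r ^ p = exp (α / 2 * r ^ 2) := by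
  rw [gaussTrial, ← exp_mul]
  field_simp

section GaussTrialIntegrals

variable {n : ℕ} {p α : ℝ}

lemma lintegral_muN_mul_gaussTrial_rpow (hn : 1 ≤ n) (hp : 0 < p) (hα : α < 1) :
    ∫⁻ r, ENNReal.ofReal ((r * |gaussTrial p α r|) ^ p) ∂ muN n =
      ENNReal.ofReal (((1 - α) / 2) ^ (-(n + p) / 2) * (1 / 2) * Gamma ((n + p) / 2)) := by
  rw [show (1 - α) / 2 = 1 / 2 - α / 2 by ring,
    ← lintegral_muN_rpow_mul_exp hn (by linarith [n.cast_nonneg (α := ℝ)]) (by linarith)]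
  refine lintegral_congr_ae ((ae_muN_pos n).mono fun r (hr : 0 < r) => ?_)
  dsimp only
  rw [abs_of_pos (gaussTrial_pos p α r), mul_rpow hr.le (gaussTrial_pos p α r).le,
    gaussTrial_rpow hp.ne']

lemma lintegral_muN_gaussTrial_rpow (hn : 1 ≤ n) (hp : p ≠ 0) (hα : α < 1) :
    ∫⁻ r, ENNReal.ofReal (|gaussTrial p α r| ^ p) ∂ muN n =
      ENNReal.ofReal (((1 - α) / 2) ^ (-(n : ℝ) / 2) * (1 / 2) * Gamma (n / 2)) := by
  have h := lintegral_muN_rpow_mul_exp (n := n) (s := 0) hn (by simp; omega) (a := α / 2)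
    (by linarith)
  simp only [rpow_zero, one_mul, add_zero] at h
  rw [show (1 - α) / 2 = 1 / 2 - α / 2 by ring, ← h]
  simp_rw [abs_of_pos (gaussTrial_pos _ _ _), gaussTrial_rpow hp]

lemma lintegral_muN_deriv_gaussTrial_rpow (hp : 0 < p) (hα : 0 ≤ α) :
    ∫⁻ r, ENNReal.ofReal (|deriv (gaussTrial p α) r| ^ p) ∂ muN n =
      ENNReal.ofReal ((α / p) ^ p) *
        ∫⁻ r, ENNReal.ofReal ((r * |gaussTrial p α r|) ^ p) ∂ muN n := by
  rw [← lintegral_const_mul' _ _ ENNReal.ofReal_ne_top]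
  refine lintegral_congr_ae ((ae_muN_pos n).mono fun r (hr : 0 < r) => ?_)
  have hc : 0 ≤ α / p := by positivity
  dsimp only
  rw [← ENNReal.ofReal_mul (by positivity), deriv_gaussTrial, mul_assoc, abs_mul,
    abs_of_nonneg hc, abs_mul, abs_of_pos hr, mul_rpow hc (by positivity)]

end GaussTrialIntegrals

lemma le_max_mul_add_of_ofReal_le {K L c C₁ C₂ D : ℝ} (hK : 0 ≤ K) (hL : 0 ≤ L) (hc : 0 ≤ c)
    (hD : 0 ≤ D) (hC₂ : C₂ ≤ D)
    (h : ENNReal.ofReal K ≤ ENNReal.ofReal C₁ * ENNReal.ofReal L +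
      ENNReal.ofReal C₂ * (ENNReal.ofReal c * ENNReal.ofReal K)) :
    K ≤ max C₁ 0 * L + D * (c * K) := by
  refine (ENNReal.ofReal_le_ofReal_iff (by positivity)).mp (h.trans ?_)
  rw [ENNReal.ofReal_add (by positivity) (by positivity), ENNReal.ofReal_mul (le_max_right _ _),
    ENNReal.ofReal_mul hD, ENNReal.ofReal_mul hc]
  gcongr
  exact le_max_left _ _

lemma two_mul_mul_le_of_le_add_rpow {p β K X : ℝ} (hp : 1 ≤ p) (hβ0 : 0 < β) (hβ1 : β < 1 / 2)
    (hK : 0 ≤ K) (h : K ≤ X + p ^ p * (((1 - 2 * β) / p) ^ p * K)) : 2 * β * K ≤ X := by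
  have hα : 0 ≤ 1 - 2 * β := by linarith
  have hpp : p ^ p * ((1 - 2 * β) / p) ^ p = (1 - 2 * β) ^ p := by
    rw [div_rpow hα (by linarith)]
    field_simp
  have hle : (1 - 2 * β) ^ p ≤ 1 - 2 * β := rpow_le_self_of_le_one hα (by linarith) hp
  nlinarith [mul_le_mul_of_nonneg_right hle hK]

lemma rpow_mul_le_of_two_mul_le {n p β C G₀ G₁ : ℝ} (hβ : 0 < β)
    (h : 2 * β * (β ^ (-(n + p) / 2) * (1 / 2) * G₁) ≤ C * (β ^ (-n / 2) * (1 / 2) * G₀)) :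
    β ^ (-(p - 2) / 2) * G₁ ≤ C * G₀ / 2 := by
  have hsplit : β ^ (-(n + p) / 2) * β = β ^ (-n / 2) * β ^ (-(p - 2) / 2) := by
    rw [← rpow_add_one hβ.ne', ← rpow_add hβ]
    ring_nf
  refine le_of_mul_le_mul_left ?_ (rpow_pos_of_pos hβ (-n / 2))
  calc β ^ (-n / 2) * (β ^ (-(p - 2) / 2) * G₁)
      = 2 * β * (β ^ (-(n + p) / 2) * (1 / 2) * G₁) := by rw [← mul_assoc, ← hsplit]; ring
    _ ≤ C * (β ^ (-n / 2) * (1 / 2) * G₀) := h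
    _ = β ^ (-n / 2) * (C * G₀ / 2) := by ring

/-- Optimality of `C₂`: for `n ≥ 1`, `p > 2` there are no finite constants
`C₁, C₂` with `C₂ ≤ p^p` for which `K ≤ C₁ L + C₂ 𝔐` holds for all continuous
piecewise `C¹` functions `u : [0,∞) → ℝ`. -/
theorem stmt_9 (n : ℕ) (hn : 1 ≤ n) (p : ℝ) (hp : 2 < p) :
    ¬ ∃ C₁ C₂ : ℝ, C₂ ≤ p ^ p ∧
      ∀ u : ℝ → ℝ, PiecewiseC1 u →
        (∫⁻ r, ENNReal.ofReal ((r * |u r|) ^ p) ∂ muN n) ≤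
          ENNReal.ofReal C₁ * (∫⁻ r, ENNReal.ofReal (|u r| ^ p) ∂ muN n) +
          ENNReal.ofReal C₂ * (∫⁻ r, ENNReal.ofReal (|deriv u r| ^ p) ∂ muN n) := by
  rintro ⟨C₁, C₂, hC₂, H⟩
  have hp0 : 0 < p := by linarith
  have hp1 : 1 ≤ p := by linarith
  have hbound : ∀ β ∈ Ioo (0 : ℝ) (1 / 2),
      β ^ (-(p - 2) / 2) * Gamma ((n + p) / 2) ≤ max C₁ 0 * Gamma (n / 2) / 2 := by
    rintro β ⟨hβ0, hβ1⟩
    have h := H _ (piecewiseC1_of_contDiff (contDiff_gaussTrial p (1 - 2 * β)))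
    have hα0 : 0 ≤ 1 - 2 * β := by linarith
    have hα1 : 1 - 2 * β < 1 := by linarith
    rw [lintegral_muN_deriv_gaussTrial_rpow hp0 hα0, lintegral_muN_mul_gaussTrial_rpow hn hp0 hα1,
      lintegral_muN_gaussTrial_rpow hn hp0.ne' hα1,
      show (1 - (1 - 2 * β)) / 2 = β by ring] at h
    apply rpow_mul_le_of_two_mul_le (n := n) hβ0
    apply two_mul_mul_le_of_le_add_rpow hp1 hβ0 hβ1 (by positivity)
    exact le_max_mul_add_of_ofReal_le (by positivity) (by positivity) (by positivity)
      (by positivity) hC₂ h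
  have hblowup : Tendsto (fun β : ℝ => β ^ (-(p - 2) / 2) * Gamma ((n + p) / 2)) (𝓝[>] 0) atTop :=
    (tendsto_rpow_neg_nhdsGT_zero (by linarith)).atTop_mul_const (by positivity)
  obtain ⟨β, hlt, hβ⟩ :=
    ((hblowup.eventually_gt_atTop _).and (Ioo_mem_nhdsGT (by norm_num : (0 : ℝ) < 1 / 2))).exists
  exact (hbound β hβ).not_gt hlt
end

section
/- Let n ≥ 1 and p > 2. If constants C₁, C₂ ≥ 0 are such that ∫₀^∞ (r|u(r)|)^p dμ_n(r) ≤ C₁ ∫₀^∞ |u(r)|^p dμ_n(r) + C₂ ∫₀^∞ |u'(r)|^p dμ_n(r) holds for all continuous and piecewise C¹ functions u:[0,∞)→ℝ, then C₁ ≥ 2^{p/2} Γ((n+p)/2) / Γ(n/2). -/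
/-!
Testing the inequality on the constant function `u = 1` kills the derivative term and leaves
`∫ r^p dμ_n ≤ C₁ μ_n(0,∞)`. Both sides are Gamma integrals after the substitution `t = r²/2`, and
their ratio is the `p`-th moment `2^{p/2} Γ((n+p)/2) / Γ(n/2)` of the chi distribution.
-/

open MeasureTheory Real Set Filter

lemma integral_rpow_mul_exp_neg_sq_div_two {s : ℝ} (hs : -1 < s) :
    ∫ r in Ioi (0 : ℝ), r ^ s * exp (-r ^ 2 / 2) =
      2 ^ ((s - 1) / 2) * Gamma ((s + 1) / 2) := by
  have hexp (r : ℝ) : exp (-r ^ 2 / 2) = exp (-(1 / 2) * r ^ (2 : ℝ)) := by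
    rw [rpow_two]; ring_nf
  simp_rw [hexp]
  rw [integral_rpow_mul_exp_neg_mul_rpow two_pos hs one_half_pos, one_div,
    inv_rpow zero_le_two, ← rpow_neg zero_le_two,
    show (s - 1) / 2 = -(-(s + 1) / 2) - 1 by ring, rpow_sub_one two_ne_zero]
  ring

lemma lintegral_rpow_mul_exp_neg_sq_div_two {s : ℝ} (hs : -1 < s) :
    ∫⁻ r in Ioi (0 : ℝ), ENNReal.ofReal (r ^ s * exp (-r ^ 2 / 2)) =
      ENNReal.ofReal (2 ^ ((s - 1) / 2) * Gamma ((s + 1) / 2)) := by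
  rw [← integral_rpow_mul_exp_neg_sq_div_two hs, ofReal_integral_eq_lintegral_ofReal]
  · have hexp (r : ℝ) : exp (-r ^ 2 / 2) = exp (-(1 / 2) * r ^ 2) := by ring_nf
    simp_rw [hexp]
    exact integrableOn_rpow_mul_exp_neg_mul_sq one_half_pos hs
  · filter_upwards [ae_restrict_mem measurableSet_Ioi] with r (hr : 0 < r)
    positivity

lemma lintegral_rpow_muN {n : ℕ} (hn : 1 ≤ n) {q : ℝ} (hq : -(n : ℝ) < q) :
    ∫⁻ r, ENNReal.ofReal (r ^ q) ∂muN n =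
      ENNReal.ofReal (2 ^ ((n + q) / 2 - 1) * Gamma ((n + q) / 2)) := by
  have hs : -1 < (n - 1 : ℝ) + q := by linarith
  have hcast : ((n - 1 : ℕ) : ℝ) = n - 1 := by rw [Nat.cast_sub hn, Nat.cast_one]
  rw [muN, lintegral_withDensity_eq_lintegral_mul _ (by fun_prop) (by fun_prop)]
  convert lintegral_rpow_mul_exp_neg_sq_div_two hs using 1
  · refine setLIntegral_congr_fun measurableSet_Ioi fun r (hr : 0 < r) => ?_
    rw [Pi.mul_apply, ← ENNReal.ofReal_mul (by positivity), rpow_add hr, ← hcast, rpow_natCast]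
    ring_nf
  · ring_nf

lemma muN_univ {n : ℕ} (hn : 1 ≤ n) :
    muN n univ = ENNReal.ofReal (2 ^ ((n : ℝ) / 2 - 1) * Gamma (n / 2)) := by
  have hn' : (0 : ℝ) < n := by exact_mod_cast hn
  simpa only [rpow_zero, ENNReal.ofReal_one, lintegral_one, add_zero]
    using lintegral_rpow_muN hn (q := 0) (by linarith)

lemma lintegral_rpow_muN_eq_mul_muN_univ {n : ℕ} (hn : 1 ≤ n) {p : ℝ} (hp : -(n : ℝ) < p) :
    ∫⁻ r, ENNReal.ofReal (r ^ p) ∂muN n =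
      ENNReal.ofReal (2 ^ (p / 2) * Gamma ((n + p) / 2) / Gamma (n / 2)) * muN n univ := by
  have hn' : (0 : ℝ) < n := by exact_mod_cast hn
  have hΓ : 0 < Gamma (n / 2) := Gamma_pos_of_pos (by positivity)
  have hΓp : 0 < Gamma ((n + p) / 2) := Gamma_pos_of_pos (by linarith)
  rw [lintegral_rpow_muN hn hp, muN_univ hn, ← ENNReal.ofReal_mul (by positivity)]
  congr 1
  rw [show ((n : ℝ) + p) / 2 - 1 = p / 2 + (n / 2 - 1) by ring, rpow_add two_pos]
  field_simp

lemma muN_univ_ne_zero {n : ℕ} (hn : 1 ≤ n) : muN n univ ≠ 0 := by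
  have hΓ : 0 < Gamma (n / 2) := Gamma_pos_of_pos (by positivity)
  rw [muN_univ hn, ENNReal.ofReal_ne_zero_iff]
  positivity

lemma muN_univ_ne_top {n : ℕ} (hn : 1 ≤ n) : muN n univ ≠ ⊤ := by
  rw [muN_univ hn]
  exact ENNReal.ofReal_ne_top

lemma piecewiseC1_const (c : ℝ) : PiecewiseC1 fun _ => c :=
  ⟨continuousOn_const, ∅, finite_empty, fun _ _ => differentiableAt_const c,
    by simpa only [deriv_const'] using continuousOn_const⟩

theorem stmt_10_general (n : ℕ) (hn : 1 ≤ n) (p : ℝ) (hp : 2 < p)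
    (C₁ C₂ : ℝ)
    (h : ∀ u : ℝ → ℝ, PiecewiseC1 u →
      (∫⁻ r, ENNReal.ofReal ((r * |u r|) ^ p) ∂ muN n) ≤
        ENNReal.ofReal C₁ * (∫⁻ r, ENNReal.ofReal (|u r| ^ p) ∂ muN n) +
        ENNReal.ofReal C₂ * (∫⁻ r, ENNReal.ofReal (|deriv u r| ^ p) ∂ muN n)) :
    2 ^ (p / 2) * Real.Gamma ((n + p) / 2) / Real.Gamma (n / 2) ≤ C₁ := by
  have hn' : (0 : ℝ) < n := by exact_mod_cast hn
  have key := h (fun _ => 1) (piecewiseC1_const 1)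
  simp only [deriv_const', abs_zero, abs_one, mul_one, zero_rpow (by positivity : p ≠ 0),
    one_rpow, ENNReal.ofReal_zero, ENNReal.ofReal_one, lintegral_zero, lintegral_one,
    mul_zero, add_zero] at key
  rw [lintegral_rpow_muN_eq_mul_muN_univ hn (by linarith),
    ENNReal.mul_le_mul_iff_left (muN_univ_ne_zero hn) (muN_univ_ne_top hn)] at key
  have hΓ : 0 < Gamma (n / 2) := Gamma_pos_of_pos (by positivity)
  have hΓp : 0 < Gamma ((n + p) / 2) := Gamma_pos_of_pos (by linarith)
  have hpos : 0 < 2 ^ (p / 2) * Gamma ((n + p) / 2) / Gamma (n / 2) := by positivity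
  exact (ENNReal.ofReal_le_ofReal_iff'.mp key).resolve_right hpos.not_ge

/-- Optimality of `C₁`: if `K ≤ C₁ L + C₂ 𝔐` holds for all continuous piecewise
`C¹` functions `u`, then `C₁ ≥ 2^{p/2} Γ((n+p)/2) / Γ(n/2)`. -/
theorem stmt_10 (n : ℕ) (hn : 1 ≤ n) (p : ℝ) (hp : 2 < p)
    (C₁ C₂ : ℝ) (hC₁ : 0 ≤ C₁) (hC₂ : 0 ≤ C₂)
    (h : ∀ u : ℝ → ℝ, PiecewiseC1 u →
      (∫⁻ r, ENNReal.ofReal ((r * |u r|) ^ p) ∂ muN n) ≤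
        ENNReal.ofReal C₁ * (∫⁻ r, ENNReal.ofReal (|u r| ^ p) ∂ muN n) +
        ENNReal.ofReal C₂ * (∫⁻ r, ENNReal.ofReal (|deriv u r| ^ p) ∂ muN n)) :
    2 ^ (p / 2) * Real.Gamma ((n + p) / 2) / Real.Gamma (n / 2) ≤ C₁ :=
  stmt_10_general n hn p hp C₁ C₂ h
end

section
/- Let M:[0,∞)→[0,∞) be increasing and convex with M(0) = 0, and assume M(αx) ≤ α^{D_M} M(x) for all α ≥ 1 and x ≥ 0. Then for every ε ∈ (0,1] and all a, b ≥ 0, M(a)·b ≤ ε M(a) + ε^{−D_M} M(ab). -/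
open Real Set

/-! Split according to the size of `b`. If `b ≤ ε`, the term `ε M(a)` suffices. Otherwise the
second term does: for `b ≥ 1`, convexity and `M 0 = 0` make `M` superlinear, `M(a) b ≤ M(ab)`;
for `ε < b < 1`, the growth condition with `α = 1/b` gives `M(a) ≤ b^{-D} M(ab) ≤ ε^{-D} M(ab)`. -/

lemma MonotoneOn.map_nonneg_of_map_zero {α β : Type*} [Preorder α] [Zero α] [Preorder β] [Zero β]
    {f : α → β} (hf : MonotoneOn f (Ici 0)) (hf₀ : f 0 = 0) {x : α} (hx : 0 ≤ x) : 0 ≤ f x :=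
  hf₀ ▸ hf self_mem_Ici hx hx

lemma ConvexOn.map_smul_le_of_map_zero {𝕜 E β : Type*} [Ring 𝕜] [PartialOrder 𝕜] [IsOrderedRing 𝕜]
    [AddCommGroup E] [Module 𝕜 E] [AddCommGroup β] [PartialOrder β] [Module 𝕜 β]
    {s : Set E} {f : E → β} (hf : ConvexOn 𝕜 s f) (h₀ : (0 : E) ∈ s) (hf₀ : f 0 = 0)
    {x : E} (hx : x ∈ s) {t : 𝕜} (ht₀ : 0 ≤ t) (ht₁ : t ≤ 1) : f (t • x) ≤ t • f x := by
  simpa [hf₀] using hf.2 hx h₀ ht₀ (sub_nonneg.2 ht₁) (add_sub_cancel t 1)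

lemma ConvexOn.map_mul_le_map_mul_of_one_le {f : ℝ → ℝ} (hf : ConvexOn ℝ (Ici 0) f)
    (hf₀ : f 0 = 0) {a b : ℝ} (ha : 0 ≤ a) (hb : 1 ≤ b) : f a * b ≤ f (a * b) := by
  have hb₀ : 0 < b := one_pos.trans_le hb
  have := hf.map_smul_le_of_map_zero self_mem_Ici hf₀ (mem_Ici.2 (mul_nonneg ha hb₀.le))
    (inv_nonneg.2 hb₀.le) (inv_le_one_of_one_le₀ hb)
  rw [smul_eq_mul, smul_eq_mul, mul_comm a b, inv_mul_cancel_left₀ hb₀.ne'] at this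
  rwa [← le_div_iff₀ hb₀, div_eq_inv_mul, mul_comm a b]

lemma map_le_rpow_neg_mul_map_mul {f : ℝ → ℝ} {D : ℝ}
    (hf : ∀ x : ℝ, 0 ≤ x → ∀ α : ℝ, 1 ≤ α → f (α * x) ≤ α ^ D * f x)
    {a b : ℝ} (ha : 0 ≤ a) (hb₀ : 0 < b) (hb₁ : b ≤ 1) : f a ≤ b ^ (-D) * f (a * b) := by
  have := hf (a * b) (mul_nonneg ha hb₀.le) b⁻¹ (one_le_inv₀ hb₀ |>.2 hb₁)
  rwa [mul_comm a b, inv_mul_cancel_left₀ hb₀.ne', inv_rpow hb₀.le, ← rpow_neg hb₀.le,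
    mul_comm b a] at this

/-- Lemma 7: if `M : [0,∞) → [0,∞)` is increasing and convex with `M(0) = 0` and
`M(αx) ≤ α^{D_M} M(x)` for `α ≥ 1`, then for every `ε ∈ (0,1]` and `a, b ≥ 0`,
`M(a)·b ≤ ε M(a) + ε^{−D_M} M(ab)`. -/
theorem stmt_12 (M : ℝ → ℝ) (DM : ℝ) (hDM : 0 < DM)
    (hmono : MonotoneOn M (Set.Ici 0))
    (hconv : ConvexOn ℝ (Set.Ici 0) M)
    (h0 : M 0 = 0)
    (hdbl : ∀ x : ℝ, 0 ≤ x → ∀ α : ℝ, 1 ≤ α → M (α * x) ≤ α ^ DM * M x)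
    (ε : ℝ) (hε : ε ∈ Set.Ioc (0 : ℝ) 1) (a b : ℝ) (ha : 0 ≤ a) (hb : 0 ≤ b) :
    M a * b ≤ ε * M a + ε ^ (-DM) * M (a * b) := by
  obtain ⟨hε₀, hε₁⟩ := hε
  have hMa : 0 ≤ M a := hmono.map_nonneg_of_map_zero h0 ha
  have hMab : 0 ≤ M (a * b) := hmono.map_nonneg_of_map_zero h0 (mul_nonneg ha hb)
  rcases le_or_gt b ε with hbε | hεb
  · have : 0 ≤ ε ^ (-DM) * M (a * b) := mul_nonneg (rpow_nonneg hε₀.le _) hMab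
    linarith [mul_le_mul_of_nonneg_left hbε hMa]
  suffices M a * b ≤ ε ^ (-DM) * M (a * b) by linarith [mul_nonneg hε₀.le hMa]
  rcases le_or_gt 1 b with hb₁ | hb₁
  · calc M a * b ≤ M (a * b) := hconv.map_mul_le_map_mul_of_one_le h0 ha hb₁
      _ ≤ ε ^ (-DM) * M (a * b) :=
        le_mul_of_one_le_left hMab (one_le_rpow_of_pos_of_le_one_of_nonpos hε₀ hε₁ (by linarith))
  · calc M a * b ≤ M a := mul_le_of_le_one_right hMa hb₁.le
      _ ≤ b ^ (-DM) * M (a * b) := map_le_rpow_neg_mul_map_mul hdbl ha (hε₀.trans hεb) hb₁.le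
      _ ≤ ε ^ (-DM) * M (a * b) :=
        mul_le_mul_of_nonneg_right (rpow_le_rpow_of_nonpos hε₀ hεb.le (by linarith)) hMab
end
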